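/- Let A be an unambiguous nondeterministic parity tree automaton, and suppose the pair (q,a) is productive. If δ₁ ≠ δ₂ are two transitions of A starting from (q,a), then the languages L_{δ₁} and L_{δ₂} are disjoint. -/

import Mathlib

/-!
Grafting an accepting run below a reachable vertex of another accepting run gives again an
accepting run: every branch either stays outside the grafted subtree or eventually runs inside it,
and a parity condition only depends on a tail of the branch. So if some accepting run from `q₀`
visits `q` at `v`, two accepting runs from `q` on the same tree graft to two accepting runs from
`q₀` on the same tree, which coincide by unambiguity. Hence the run from `q` is unique, and so is
the transition it uses at the root.
-/

open Filter Set

/-- An infinite binary tree over alphabet `A`. -/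
abbrev Tree' (A : Type) := List Bool → A

/-- Subtree of `t` rooted at vertex `v`. -/
def subtreeAt {A : Type} (t : Tree' A) (v : List Bool) : Tree' A := fun w => t (v ++ w)

/-- Substitution `t[r/v]`: replace the subtree of `t` at `v` by `r`. -/
def substAt {A : Type} (t r : Tree' A) (v : List Bool) : Tree' A :=
  fun w => if v <+: w then r (w.drop v.length) else t w

/-- A nondeterministic parity tree automaton. -/
structure NPA (Q A : Type) where
  q0 : Q
  Δ : Set (Q × Q × A × Q)
  Ω : Q → ℕ

/-- `ρ` is a run of `M` on `t`. `false` = left, `true` = right. -/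
def NPA.IsRun {Q A : Type} (M : NPA Q A) (t : Tree' A) (ρ : Tree' Q) : Prop :=
  ∀ v : List Bool, (ρ v, ρ (v ++ [false]), t v, ρ (v ++ [true])) ∈ M.Δ

/-- Length-`n` prefix of an infinite branch, as a vertex. -/
def pref (b : ℕ → Bool) (n : ℕ) : List Bool := (List.range n).map b

/-- `ρ` is an accepting run of `M` on `t`. -/
def NPA.Accepting {Q A : Type} (M : NPA Q A) (t : Tree' A) (ρ : Tree' Q) : Prop :=
  M.IsRun t ρ ∧
    ∀ b : ℕ → Bool, Even (Filter.limsup (fun n => M.Ω (ρ (pref b n))) Filter.atTop)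

/-- Accepting run starting from state `q`. -/
def NPA.AcceptingFrom {Q A : Type} (M : NPA Q A) (q : Q) (t : Tree' A) (ρ : Tree' Q) : Prop :=
  M.Accepting t ρ ∧ ρ [] = q

/-- The language recognised by `M`. -/
def NPA.Lang {Q A : Type} (M : NPA Q A) : Set (Tree' A) :=
  { t | ∃ ρ, M.AcceptingFrom M.q0 t ρ }

/-- `M` is unambiguous. -/
def NPA.Unambiguous {Q A : Type} (M : NPA Q A) : Prop :=
  ∀ (t : Tree' A) (ρ₁ ρ₂ : Tree' Q),
    M.AcceptingFrom M.q0 t ρ₁ → M.AcceptingFrom M.q0 t ρ₂ → ρ₁ = ρ₂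

/-- `(q, a)` is productive. -/
def NPA.Productive {Q A : Type} (M : NPA Q A) (q : Q) (a : A) : Prop :=
  ∃ (t : Tree' A) (ρ : Tree' Q) (v : List Bool),
    M.AcceptingFrom M.q0 t ρ ∧ ρ v = q ∧ t v = a

/-- The transition `δ` starts from the pair `(q, a)`. -/
def NPA.StartsFrom {Q A : Type} (M : NPA Q A) (δ : Q × Q × A × Q) (q : Q) (a : A) : Prop :=
  δ ∈ M.Δ ∧ δ.1 = q ∧ δ.2.2.1 = a

/-- `L_δ`: trees with an accepting run using transition `δ` at the root. -/
def NPA.Ldelta {Q A : Type} (M : NPA Q A) (δ : Q × Q × A × Q) : Set (Tree' A) :=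
  { t | ∃ ρ : Tree' Q, M.Accepting t ρ ∧
      ρ [] = δ.1 ∧ ρ [false] = δ.2.1 ∧ t [] = δ.2.2.1 ∧ ρ [true] = δ.2.2.2 }

section Trees

variable {A : Type}

@[simp]
lemma substAt_append (t r : Tree' A) (v u : List Bool) : substAt t r v (v ++ u) = r u := by
  simp [substAt, List.prefix_append]

lemma substAt_of_not_prefix (t r : Tree' A) {v w : List Bool} (h : ¬ v <+: w) :
    substAt t r v w = t w := by
  simp [substAt, h]

lemma substAt_apply_of_prefix_imp_eq {t r : Tree' A} {v w : List Bool} (hv : t v = r [])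
    (hw : v <+: w → w = v) : substAt t r v w = t w := by
  by_cases hp : v <+: w
  · obtain rfl := hw hp
    simp [substAt, hv]
  · exact substAt_of_not_prefix t r hp

lemma substAt_nil {t r : Tree' A} {v : List Bool} (hv : t v = r []) : substAt t r v [] = t [] :=
  substAt_apply_of_prefix_imp_eq hv fun h => (List.prefix_nil.mp h).symm

lemma substAt_concat_of_not_prefix {t r : Tree' A} {v w : List Bool} (hv : t v = r [])
    (hw : ¬ v <+: w) (d : Bool) : substAt t r v (w ++ [d]) = t (w ++ [d]) :=
  substAt_apply_of_prefix_imp_eq hv fun h =>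
    ((List.prefix_concat_iff.mp h).resolve_right hw).symm

end Trees

lemma length_pref (b : ℕ → Bool) (n : ℕ) : (pref b n).length = n := by
  simp [pref]

lemma pref_add (b : ℕ → Bool) (k n : ℕ) :
    pref b (k + n) = pref b k ++ pref (fun i => b (k + i)) n := by
  simp [pref, List.range_add, Function.comp_def]

lemma pref_prefix_pref (b : ℕ → Bool) {m n : ℕ} (h : m ≤ n) : pref b m <+: pref b n := by
  obtain ⟨k, rfl⟩ := Nat.exists_eq_add_of_le h
  rw [pref_add]
  exact List.prefix_append _ _

lemma eq_pref_of_prefix_pref {b : ℕ → Bool} {v : List Bool} {n : ℕ} (h : v <+: pref b n) :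
    v = pref b v.length := by
  have hle : v.length ≤ n := length_pref b n ▸ h.length_le
  have hpref : v <+: pref b v.length :=
    List.prefix_of_prefix_length_le h (pref_prefix_pref b hle) (by rw [length_pref])
  exact hpref.eq_of_length (length_pref b _).symm

namespace NPA

variable {Q A : Type} {M : NPA Q A} {t₀ t : Tree' A} {ρ₀ ρ : Tree' Q} {v : List Bool}

lemma IsRun.substAt (h₀ : M.IsRun t₀ ρ₀) (h : M.IsRun t ρ) (hv : ρ₀ v = ρ []) :
    M.IsRun (substAt t₀ t v) (substAt ρ₀ ρ v) := by
  intro w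
  by_cases hw : v <+: w
  · obtain ⟨u, rfl⟩ := hw
    simpa only [List.append_assoc, substAt_append] using h u
  · rw [substAt_of_not_prefix _ _ hw, substAt_of_not_prefix _ _ hw,
      substAt_concat_of_not_prefix hv hw, substAt_concat_of_not_prefix hv hw]
    exact h₀ w

lemma Accepting.substAt (h₀ : M.Accepting t₀ ρ₀) (h : M.Accepting t ρ)
    (hv : ρ₀ v = ρ []) : M.Accepting (substAt t₀ t v) (substAt ρ₀ ρ v) := by
  refine ⟨h₀.1.substAt h.1 hv, fun b => ?_⟩
  by_cases hb : ∃ n, v <+: pref b n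
  · obtain ⟨n, hn⟩ := hb
    have hvb := eq_pref_of_prefix_pref hn
    have htail : (fun n => M.Ω (_root_.substAt ρ₀ ρ v (pref b (n + v.length)))) =
        fun n => M.Ω (ρ (pref (fun i => b (v.length + i)) n)) := by
      funext n
      rw [Nat.add_comm, pref_add, ← hvb, substAt_append]
    rw [← limsup_nat_add _ v.length, htail]
    exact h.2 _
  · rw [not_exists] at hb
    simp only [substAt_of_not_prefix _ _ (hb _)]
    exact h₀.2 b

lemma AcceptingFrom.substAt {q : Q} (h₀ : M.AcceptingFrom q t₀ ρ₀)
    (h : M.Accepting t ρ) (hv : ρ₀ v = ρ []) :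
    M.AcceptingFrom q (substAt t₀ t v) (substAt ρ₀ ρ v) :=
  ⟨h₀.1.substAt h hv, (substAt_nil hv).trans h₀.2⟩

lemma Unambiguous.eq_of_acceptingFrom (hU : M.Unambiguous)
    (h₀ : M.AcceptingFrom M.q0 t₀ ρ₀) {ρ₁ ρ₂ : Tree' Q} (h₁ : M.AcceptingFrom (ρ₀ v) t ρ₁)
    (h₂ : M.AcceptingFrom (ρ₀ v) t ρ₂) : ρ₁ = ρ₂ := by
  have hgraft := hU _ _ _ (h₀.substAt h₁.1 h₁.2.symm) (h₀.substAt h₂.1 h₂.2.symm)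
  funext u
  simpa only [substAt_append] using congrFun hgraft (v ++ u)

lemma mem_Ldelta_iff {δ : Q × Q × A × Q} :
    t ∈ M.Ldelta δ ↔ ∃ ρ, M.Accepting t ρ ∧ (ρ [], ρ [false], t [], ρ [true]) = δ := by
  obtain ⟨q, qL, a, qR⟩ := δ
  simp [Ldelta]

end NPA

theorem stmt4 {Q A : Type} (M : NPA Q A) (hU : M.Unambiguous) (q : Q) (a : A)
    (hprod : M.Productive q a) (δ₁ δ₂ : Q × Q × A × Q)
    (h1 : M.StartsFrom δ₁ q a) (h2 : M.StartsFrom δ₂ q a) (hne : δ₁ ≠ δ₂) :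
    M.Ldelta δ₁ ∩ M.Ldelta δ₂ = ∅ := by
  obtain ⟨t₀, ρ₀, v, h₀, rfl, -⟩ := hprod
  refine Set.eq_empty_iff_forall_notMem.2 fun t ⟨ht₁, ht₂⟩ => hne ?_
  obtain ⟨ρ₁, hρ₁, rfl⟩ := NPA.mem_Ldelta_iff.1 ht₁
  obtain ⟨ρ₂, hρ₂, rfl⟩ := NPA.mem_Ldelta_iff.1 ht₂
  rw [hU.eq_of_acceptingFrom h₀ ⟨hρ₁, h1.2.1⟩ ⟨hρ₂, h2.2.1⟩]
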